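/- arXiv:1609.01961 — 5 statements merged into one kernel-verified Lean document; each statement's English description precedes it below -/
import Mathlib

section
/- Let K ≥ 2 be a natural number, let η ∈ (0,1), and let C, r_max be real numbers with 0 < C < r_max. Let F : ℝ → ℝ be continuous on the closed interval [C, r_max] with F(r_max) = 1 and F(C) < 1. Then there exists r ∈ (C, r_max) such that ∑_{n=1}^{K−1} (K−1 choose n) · (F(r) − F(C))^n · (1 − F(r))^{K−1−n} · (C − r)/(n+1) + (1 − F(r))^{K−1} · (C − ((K−1+η)/K)·r) = 0. -/
theorem stmt_0 (K : ℕ) (hK : 2 ≤ K) (η C rmax : ℝ)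
    (hη1 : 0 < η) (hη2 : η < 1)
    (hC : 0 < C) (hCr : C < rmax)
    (F : ℝ → ℝ) (hF : ContinuousOn F (Set.Icc C rmax))
    (hFmax : F rmax = 1) (hFC : F C < 1) :
    ∃ r ∈ Set.Ioo C rmax,
      (∑ n ∈ Finset.Icc 1 (K - 1),
          ((K - 1).choose n : ℝ) * (F r - F C) ^ n * (1 - F r) ^ (K - 1 - n) *
            (C - r) / ((n : ℝ) + 1)) +
        (1 - F r) ^ (K - 1) * (C - (((K : ℝ) - 1 + η) / K) * r) = 0 := by
  set g : ℝ → ℝ := fun r =>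
    (∑ n ∈ Finset.Icc 1 (K - 1),
        ((K - 1).choose n : ℝ) * (F r - F C) ^ n * (1 - F r) ^ (K - 1 - n) *
          (C - r) / ((n : ℝ) + 1)) +
      (1 - F r) ^ (K - 1) * (C - (((K : ℝ) - 1 + η) / K) * r) with hg
  have hk1 : 1 ≤ K - 1 := by omega
  have hKpos : (0:ℝ) < K := by positivity
  have hFCpos : 0 < 1 - F C := by linarith
  have hgC : 0 < g C := by
    have hsum : (∑ n ∈ Finset.Icc 1 (K - 1),
        ((K - 1).choose n : ℝ) * (F C - F C) ^ n * (1 - F C) ^ (K - 1 - n) *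
          (C - C) / ((n : ℝ) + 1)) = 0 := by
      apply Finset.sum_eq_zero
      intro n hn
      simp
    have h2 : 0 < C - (((K : ℝ) - 1 + η) / K) * C := by
      have : (((K : ℝ) - 1 + η) / K) * C < 1 * C := by
        apply mul_lt_mul_of_pos_right _ hC
        rw [div_lt_one hKpos]; linarith
      linarith
    have := mul_pos (pow_pos hFCpos (K - 1)) h2
    simp only [hg, hsum, zero_add]
    exact this
  have hgR : g rmax < 0 := by
    have hsum : (∑ n ∈ Finset.Icc 1 (K - 1),
        ((K - 1).choose n : ℝ) * (F rmax - F C) ^ n * (1 - F rmax) ^ (K - 1 - n) *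
          (C - rmax) / ((n : ℝ) + 1))
        = (1 - F C) ^ (K - 1) * (C - rmax) / ((K : ℝ) - 1 + 1) := by
      rw [Finset.sum_eq_single (K - 1)]
      · rw [hFmax]
        have : ((K-1).choose (K-1) : ℝ) = 1 := by simp
        rw [this]
        have hcast : ((K - 1 : ℕ) : ℝ) = (K : ℝ) - 1 := by
          push_cast [Nat.cast_sub (by omega : 1 ≤ K)]; ring
        rw [hcast]
        simp
      · intro n hn hne
        have hlt : n < K - 1 := by
          rcases Finset.mem_Icc.mp hn with ⟨_, h2⟩; omega
        rw [hFmax]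
        have : (1 - (1:ℝ)) ^ (K - 1 - n) = 0 := by
          rw [sub_self]; exact zero_pow (by omega)
        rw [this]; ring
      · intro h; exact absurd (Finset.mem_Icc.mpr ⟨hk1, le_refl _⟩) h
    have hlast : (1 - F rmax) ^ (K - 1) * (C - (((K : ℝ) - 1 + η) / K) * rmax) = 0 := by
      rw [hFmax, sub_self, zero_pow (by omega)]; ring
    have hK1 : (0:ℝ) < (K : ℝ) - 1 + 1 := by linarith
    have hneg : (1 - F C) ^ (K - 1) * (C - rmax) / ((K : ℝ) - 1 + 1) < 0 := by
      apply div_neg_of_neg_of_pos _ hK1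
      exact mul_neg_of_pos_of_neg (pow_pos hFCpos _) (by linarith)
    simp only [hg, hsum, hlast, add_zero]
    exact hneg
  have hgcont : ContinuousOn g (Set.Icc C rmax) := by
    apply ContinuousOn.add
    · apply continuousOn_finset_sum
      intro n hn
      apply ContinuousOn.div_const
      apply ContinuousOn.mul
      apply ContinuousOn.mul
      apply ContinuousOn.mul continuousOn_const
      · exact (hF.sub continuousOn_const).pow n
      · exact ((continuousOn_const).sub hF).pow _
      · exact (continuousOn_const).sub continuousOn_id
    · exact (((continuousOn_const).sub hF).pow _).mul
        ((continuousOn_const).sub (continuousOn_const.mul continuousOn_id))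
  have h0 : (0:ℝ) ∈ Set.Ioo (g rmax) (g C) := ⟨hgR, hgC⟩
  have := intermediate_value_Ioo' (le_of_lt hCr) hgcont h0
  obtain ⟨r, hr, hgr⟩ := this
  exact ⟨r, hr, hgr⟩
end

section
/- Let K ≥ 2 be a natural number, let η ∈ (0,1), and let r_min, r_max, C be real numbers with 0 ≤ r_min < r_max and ((K−1+η)/K)·r_min < C < r_min. Let F : ℝ → ℝ be continuous on the closed interval [r_min, r_max] with F(r_min) = 0 and F(r_max) = 1. Then there exists r ∈ (r_min, r_max) such that ∑_{n=1}^{K−1} (K−1 choose n) · F(r)^n · (1 − F(r))^{K−1−n} · (C − r)/(n+1) + (1 − F(r))^{K−1} · (C − ((K−1+η)/K)·r) = 0. -/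
theorem stmt_2 (K : ℕ) (hK : 2 ≤ K) (η rmin rmax C : ℝ)
    (hη1 : 0 < η) (hη2 : η < 1)
    (hrmin : 0 ≤ rmin) (hr : rmin < rmax)
    (hC1 : (((K : ℝ) - 1 + η) / K) * rmin < C) (hC2 : C < rmin)
    (F : ℝ → ℝ) (hF : ContinuousOn F (Set.Icc rmin rmax))
    (hFmin : F rmin = 0) (hFmax : F rmax = 1) :
    ∃ r ∈ Set.Ioo rmin rmax,
      (∑ n ∈ Finset.Icc 1 (K - 1),
          ((K - 1).choose n : ℝ) * (F r) ^ n * (1 - F r) ^ (K - 1 - n) *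
            (C - r) / ((n : ℝ) + 1)) +
        (1 - F r) ^ (K - 1) * (C - (((K : ℝ) - 1 + η) / K) * r) = 0 := by
  set G : ℝ → ℝ := fun r =>
      (∑ n ∈ Finset.Icc 1 (K - 1),
          ((K - 1).choose n : ℝ) * (F r) ^ n * (1 - F r) ^ (K - 1 - n) *
            (C - r) / ((n : ℝ) + 1)) +
        (1 - F r) ^ (K - 1) * (C - (((K : ℝ) - 1 + η) / K) * r) with hGdef
  have hK1 : 1 ≤ K - 1 := by omega
  have hKpos : (0:ℝ) < (K : ℝ) := by positivity
  have hGcont : ContinuousOn G (Set.Icc rmin rmax) := by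
    apply ContinuousOn.add
    · apply continuousOn_finset_sum
      intro n hn
      apply ContinuousOn.div_const
      fun_prop
    · fun_prop
  have hGmin : G rmin = C - (((K : ℝ) - 1 + η) / K) * rmin := by
    simp only [hGdef, hFmin]
    rw [Finset.sum_eq_zero, sub_zero, one_pow, one_mul, zero_add]
    intro n hn
    have : 1 ≤ n := (Finset.mem_Icc.mp hn).1
    rw [zero_pow (by omega)]
    ring
  have hGmax : G rmax = (C - rmax) / K := by
    simp only [hGdef, hFmax, sub_self]
    rw [zero_pow (by omega), zero_mul, add_zero,
      Finset.sum_eq_single (K - 1)]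
    · rw [Nat.choose_self, Nat.sub_self, pow_zero, Nat.cast_one, one_mul,
        one_pow, one_mul]
      have hcast : ((K - 1 : ℕ) : ℝ) + 1 = K := by
        rw [Nat.cast_sub (by omega : 1 ≤ K)]; ring
      rw [hcast]; ring
    · intro n hn hne
      have h1 : n ≤ K - 1 := (Finset.mem_Icc.mp hn).2
      rw [zero_pow (by omega)]
      ring
    · intro h
      exact absurd (Finset.mem_Icc.mpr ⟨hK1, le_refl _⟩) h
  have hpos : 0 < G rmin := by
    rw [hGmin]; linarith
  have hneg : G rmax < 0 := by
    rw [hGmax]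
    apply div_neg_of_neg_of_pos _ hKpos
    linarith
  have := intermediate_value_Ioo' (le_of_lt hr) hGcont
    (Set.mem_Ioo.mpr ⟨hneg, hpos⟩)
  obtain ⟨r, hrmem, hr0⟩ := this
  exact ⟨r, hrmem, hr0⟩
end

section
/- Let K ≥ 2 be a natural number, let η ∈ (0,1), let C be a real number, and let p, q be real numbers with p ≤ q < 1. Define, for r ∈ ℝ, Π_a(r) = (1 − (1−p)^{K−1})·r + (1−q)^{K−1}·C + ∑_{n=1}^{K−1} (K−1 choose n) · (q−p)^n · (1−q)^{K−1−n} · (C + n·r)/(n+1) and Π_b(r) = (1 − (1−p)^{K−1})·r + (1−q)^{K−1}·((K−1+η)/K)·r + ∑_{n=1}^{K−1} (K−1 choose n) · (q−p)^n · (1−q)^{K−1−n} · r. Then the function r ↦ Π_a(r) − Π_b(r) is strictly decreasing on ℝ; consequently, if Π_a(t) = Π_b(t) for some real t, then Π_a(r) > Π_b(r) for every r < t and Π_a(r) < Π_b(r) for every r > t. -/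
/-- Expected payoff of an APO of type `r` who bids the reserve rate `C`. -/
noncomputable def PiA (K : ℕ) (C p q : ℝ) (r : ℝ) : ℝ :=
  (1 - (1 - p) ^ (K - 1)) * r + (1 - q) ^ (K - 1) * C +
    ∑ n ∈ Finset.Icc 1 (K - 1),
      ((K - 1).choose n : ℝ) * (q - p) ^ n * (1 - q) ^ (K - 1 - n) *
        (C + (n : ℝ) * r) / ((n : ℝ) + 1)

/-- Expected payoff of an APO of type `r` who bids "N". -/
noncomputable def PiB (K : ℕ) (η p q : ℝ) (r : ℝ) : ℝ :=
  (1 - (1 - p) ^ (K - 1)) * r + (1 - q) ^ (K - 1) * ((((K : ℝ) - 1 + η) / K) * r) +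
    ∑ n ∈ Finset.Icc 1 (K - 1),
      ((K - 1).choose n : ℝ) * (q - p) ^ n * (1 - q) ^ (K - 1 - n) * r

lemma key_diff (K : ℕ) (η C p q r₁ r₂ : ℝ) :
    (PiA K C p q r₁ - PiB K η p q r₁) - (PiA K C p q r₂ - PiB K η p q r₂)
      = (r₂ - r₁) * ((1 - q) ^ (K - 1) * (((K : ℝ) - 1 + η) / K)
          + ∑ n ∈ Finset.Icc 1 (K - 1),
              ((K - 1).choose n : ℝ) * (q - p) ^ n * (1 - q) ^ (K - 1 - n) / ((n : ℝ) + 1)) := by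
  simp only [PiA, PiB]
  have h : (∑ n ∈ Finset.Icc 1 (K - 1),
        ((K - 1).choose n : ℝ) * (q - p) ^ n * (1 - q) ^ (K - 1 - n) *
          (C + (n : ℝ) * r₁) / ((n : ℝ) + 1))
      - (∑ n ∈ Finset.Icc 1 (K - 1),
          ((K - 1).choose n : ℝ) * (q - p) ^ n * (1 - q) ^ (K - 1 - n) * r₁)
      - ((∑ n ∈ Finset.Icc 1 (K - 1),
          ((K - 1).choose n : ℝ) * (q - p) ^ n * (1 - q) ^ (K - 1 - n) *
            (C + (n : ℝ) * r₂) / ((n : ℝ) + 1))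
        - (∑ n ∈ Finset.Icc 1 (K - 1),
            ((K - 1).choose n : ℝ) * (q - p) ^ n * (1 - q) ^ (K - 1 - n) * r₂))
      = (r₂ - r₁) * ∑ n ∈ Finset.Icc 1 (K - 1),
          ((K - 1).choose n : ℝ) * (q - p) ^ n * (1 - q) ^ (K - 1 - n) / ((n : ℝ) + 1) := by
    rw [Finset.mul_sum, ← Finset.sum_sub_distrib, ← Finset.sum_sub_distrib,
      ← Finset.sum_sub_distrib]
    refine Finset.sum_congr rfl fun n hn => ?_
    have hn1 : ((n : ℝ) + 1) ≠ 0 := by positivity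
    field_simp
    ring
  linear_combination h
theorem stmt_3 (K : ℕ) (hK : 2 ≤ K) (η C p q : ℝ)
    (hη1 : 0 < η) (hη2 : η < 1)
    (hpq : p ≤ q) (hq : q < 1) :
    StrictAnti (fun r : ℝ => PiA K C p q r - PiB K η p q r) ∧
    ∀ t : ℝ, PiA K C p q t = PiB K η p q t →
      (∀ r : ℝ, r < t → PiA K C p q r > PiB K η p q r) ∧
      (∀ r : ℝ, t < r → PiA K C p q r < PiB K η p q r) := by
  have hKpos : (0:ℝ) < K := by positivity
  have hA : (0:ℝ) < (1 - q) ^ (K - 1) * (((K : ℝ) - 1 + η) / K) := by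
    have h1 : (0:ℝ) < 1 - q := by linarith
    have h2 : (0:ℝ) < (K : ℝ) - 1 + η := by
      have : (2:ℝ) ≤ K := by exact_mod_cast hK
      linarith
    positivity
  have hS : (0:ℝ) ≤ ∑ n ∈ Finset.Icc 1 (K - 1),
      ((K - 1).choose n : ℝ) * (q - p) ^ n * (1 - q) ^ (K - 1 - n) / ((n : ℝ) + 1) := by
    refine Finset.sum_nonneg fun n hn => ?_
    have h1 : (0:ℝ) ≤ 1 - q := by linarith
    have h2 : (0:ℝ) ≤ q - p := by linarith
    positivity
  have hM : (0:ℝ) < (1 - q) ^ (K - 1) * (((K : ℝ) - 1 + η) / K)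
      + ∑ n ∈ Finset.Icc 1 (K - 1),
          ((K - 1).choose n : ℝ) * (q - p) ^ n * (1 - q) ^ (K - 1 - n) / ((n : ℝ) + 1) := by
    linarith
  have hanti : StrictAnti (fun r : ℝ => PiA K C p q r - PiB K η p q r) := by
    intro a b hab
    have h := key_diff K η C p q a b
    have : (0:ℝ) < (b - a) * _ := mul_pos (by linarith) hM
    simp only
    linarith [h, this]
  refine ⟨hanti, fun t ht => ⟨fun r hr => ?_, fun r hr => ?_⟩⟩
  · have := hanti hr
    simp only at this
    have h0 : PiA K C p q t - PiB K η p q t = 0 := by linarith [ht]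
    linarith
  · have := hanti hr
    simp only at this
    have h0 : PiA K C p q t - PiB K η p q t = 0 := by linarith [ht]
    linarith
end

section
/- Let η, r_min, r_max, C be real numbers with 0 < η < 1, 0 ≤ r_min ≤ C, 0 < C, and C < r_max. Then there exists exactly one r ∈ (C, r_max) such that ((r − C)/(r_max − r_min)) · ((C − r)/2) + ((r_max − r)/(r_max − r_min)) · (C − ((1+η)/2)·r) = 0. -/
theorem stmt_7 (η rmin rmax C : ℝ)
    (hη1 : 0 < η) (hη2 : η < 1)
    (hrmin : 0 ≤ rmin) (hminC : rmin ≤ C) (hC : 0 < C) (hCr : C < rmax) :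
    ∃! r : ℝ, r ∈ Set.Ioo C rmax ∧
      ((r - C) / (rmax - rmin)) * ((C - r) / 2) +
        ((rmax - r) / (rmax - rmin)) * (C - ((1 + η) / 2) * r) = 0 := by
  have hd : (0:ℝ) < rmax - rmin := by linarith
  have hdne : rmax - rmin ≠ 0 := ne_of_gt hd
  set g : ℝ → ℝ := fun r => η/2 * r^2 - (1+η)/2 * rmax * r + (rmax*C - C^2/2) with hg
  have key : ∀ r : ℝ, (((r - C) / (rmax - rmin)) * ((C - r) / 2) +
        ((rmax - r) / (rmax - rmin)) * (C - ((1 + η) / 2) * r) = 0) ↔ g r = 0 := by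
    intro r
    have heq : ((r - C) / (rmax - rmin)) * ((C - r) / 2) +
        ((rmax - r) / (rmax - rmin)) * (C - ((1 + η) / 2) * r) = g r / (rmax - rmin) := by
      simp only [hg]
      field_simp
      ring
    rw [heq, div_eq_zero_iff]
    simp [hdne]
  have hgC : 0 < g C := by
    simp only [hg]
    nlinarith [mul_pos (mul_pos hC (sub_pos.mpr hCr)) (sub_pos.mpr hη2)]
  have hgr : g rmax < 0 := by
    simp only [hg]
    nlinarith [mul_pos (sub_pos.mpr hCr) (sub_pos.mpr hCr)]
  have hcont : ContinuousOn g (Set.Icc C rmax) := by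
    apply Continuous.continuousOn
    simp only [hg]
    continuity
  have hmem : (0:ℝ) ∈ Set.Ioo (g rmax) (g C) := ⟨hgr, hgC⟩
  have hex := intermediate_value_Ioo' (le_of_lt hCr) hcont hmem
  obtain ⟨r, hr, hgr0⟩ := hex
  refine ⟨r, ⟨hr, (key r).mpr hgr0⟩, ?_⟩
  rintro y ⟨hy, hy0⟩
  have hgy : g y = 0 := (key y).mp hy0
  have hrmax : 0 < rmax := lt_trans hC hCr
  have hfac : (y - r) * (η/2*(y+r) - (1+η)/2*rmax) = 0 := by
    have : g y - g r = 0 := by rw [hgy, hgr0]; ring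
    simp only [hg] at this
    linear_combination this
  have hbrack : η/2*(y+r) - (1+η)/2*rmax < 0 := by
    have h1 : y < rmax := hy.2
    have h2 : r < rmax := hr.2
    nlinarith [mul_pos hη1 (sub_pos.mpr h1), mul_pos hη1 (sub_pos.mpr h2),
      mul_pos (sub_pos.mpr hη2) hrmax]
  rcases mul_eq_zero.mp hfac with h | h
  · linarith
  · linarith
end

section
/- Let η, r_min, r_max, C be real numbers with 0 < η < 1, 0 ≤ r_min < r_max, and ((1+η)/2)·r_min < C < r_min. Then there exists exactly one r ∈ (r_min, r_max) such that ((r − r_min)/(r_max − r_min)) · ((C − r)/2) + ((r_max − r)/(r_max − r_min)) · (C − ((1+η)/2)·r) = 0. -/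
theorem stmt_8 (η rmin rmax C : ℝ)
    (hη1 : 0 < η) (hη2 : η < 1)
    (hrmin : 0 ≤ rmin) (hr : rmin < rmax)
    (hC1 : ((1 + η) / 2) * rmin < C) (hC2 : C < rmin) :
    ∃! r : ℝ, r ∈ Set.Ioo rmin rmax ∧
      ((r - rmin) / (rmax - rmin)) * ((C - r) / 2) +
        ((rmax - r) / (rmax - rmin)) * (C - ((1 + η) / 2) * r) = 0 := by
  have hd : (0:ℝ) < rmax - rmin := by linarith
  have hdne : rmax - rmin ≠ 0 := ne_of_gt hd
  set P : ℝ → ℝ := fun r => (r - rmin) * ((C - r) / 2) + (rmax - r) * (C - ((1 + η) / 2) * r)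
    with hP
  have heq : ∀ r : ℝ,
      (((r - rmin) / (rmax - rmin)) * ((C - r) / 2) +
        ((rmax - r) / (rmax - rmin)) * (C - ((1 + η) / 2) * r) = 0) ↔ P r = 0 := by
    intro r
    have hrepr : ((r - rmin) / (rmax - rmin)) * ((C - r) / 2) +
        ((rmax - r) / (rmax - rmin)) * (C - ((1 + η) / 2) * r) = P r / (rmax - rmin) := by
      rw [eq_div_iff hdne]
      simp only [hP]
      field_simp
    rw [hrepr, div_eq_zero_iff]
    constructor
    · rintro (h | h)
      · exact h
      · exact absurd h hdne
    · exact Or.inl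
  have hPmin : 0 < P rmin := by
    simp only [hP]
    nlinarith
  have hPmax : P rmax < 0 := by
    simp only [hP]
    nlinarith
  have hcont : ContinuousOn P (Set.Icc rmin rmax) := by
    apply Continuous.continuousOn
    fun_prop
  obtain ⟨r, hrmem, hr0⟩ :=
    intermediate_value_Ioo' (le_of_lt hr) hcont (Set.mem_Ioo.2 ⟨hPmax, hPmin⟩)
  refine ⟨r, ⟨hrmem, (heq r).2 hr0⟩, ?_⟩
  rintro b ⟨hbmem, hbeq⟩
  have hPb : P b = 0 := (heq b).1 hbeq
  by_contra hne'
  have h2 : (b - r) * ((η / 2) * (b + r) + (rmin / 2 - C / 2 - rmax * (1 + η) / 2)) = 0 := by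
    simp only [hP] at hPb hr0
    linear_combination hPb - hr0
  have h3 : (η / 2) * (b + r) + (rmin / 2 - C / 2 - rmax * (1 + η) / 2) = 0 :=
    (mul_eq_zero.1 h2).resolve_left (sub_ne_zero.2 hne')
  have h4 : (η / 2) * (b * r) - (rmax * C - rmin * C / 2) = 0 := by
    simp only [hP] at hPb
    linear_combination b * h3 - hPb
  have h5 : P rmax = (η / 2) * (rmax - b) * (rmax - r) := by
    simp only [hP]
    linear_combination rmax * h3 - h4
  have hb2 : b < rmax := hbmem.2
  have hr2 : r < rmax := hrmem.2
  nlinarith [mul_pos (sub_pos.2 hb2) (sub_pos.2 hr2)]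
end
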